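/- For i ≠ j, the commutators [∂_i, Δ_j] and [∂_j, Δ_i] are equal; equivalently, [∂_i, Δ_j] commutes with the transposition P_ij. -/

import Mathlib

open Finset

noncomputable section

/-- The open set of points with pairwise distinct coordinates. -/
def Omega (N : ℕ) : Set (Fin N → ℝ) := {x | Function.Injective x}

/-- The coordinate-swap (transposition) operator `P_{ij}`. -/
def Pswap {N : ℕ} (i j : Fin N) (f : (Fin N → ℝ) → ℝ) : (Fin N → ℝ) → ℝ :=
  fun x => f (x ∘ Equiv.swap i j)

/-- The difference operator `Δ_i = ∑_{j ≠ i} (x_i - x_j)⁻¹ (1 - P_{ij})`. -/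
def Delta {N : ℕ} (i : Fin N) (f : (Fin N → ℝ) → ℝ) : (Fin N → ℝ) → ℝ :=
  fun x => ∑ j ∈ Finset.univ.erase i, (f x - f (x ∘ Equiv.swap i j)) / (x i - x j)

/-- The partial derivative operator `∂_i`. -/
def pd {N : ℕ} (i : Fin N) (f : (Fin N → ℝ) → ℝ) : (Fin N → ℝ) → ℝ :=
  fun x => fderiv ℝ f x (Pi.single i 1)

/-- Multiplication by the `i`-th coordinate. -/
def xmul {N : ℕ} (i : Fin N) (f : (Fin N → ℝ) → ℝ) : (Fin N → ℝ) → ℝ :=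
  fun x => x i * f x

/-- The Dunkl operator `D_i = ∂_i + g Δ_i`. -/
def Dunkl {N : ℕ} (g : ℝ) (i : Fin N) (f : (Fin N → ℝ) → ℝ) : (Fin N → ℝ) → ℝ :=
  fun x => pd i f x + g * Delta i f x

variable {N : ℕ}

def compCLM (e : Equiv.Perm (Fin N)) : (Fin N → ℝ) →L[ℝ] (Fin N → ℝ) :=
  LinearMap.toContinuousLinearMap
    { toFun := fun x => x ∘ e
      map_add' := fun _ _ => rfl
      map_smul' := fun _ _ => rfl }

@[simp] lemma compCLM_apply (e : Equiv.Perm (Fin N)) (x : Fin N → ℝ) : compCLM e x = x ∘ e := rfl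

lemma compCLM_single (e : Equiv.Perm (Fin N)) (i : Fin N) :
    compCLM e (Pi.single i 1) = Pi.single (e.symm i) 1 := by
  funext m
  simp only [compCLM_apply, Function.comp_apply]
  by_cases h : m = e.symm i
  · subst h; rw [Equiv.apply_symm_apply]; simp
  · rw [Pi.single_eq_of_ne h, Pi.single_eq_of_ne]
    intro hc; exact h (by rw [← hc]; simp)

lemma isOpen_Omega : IsOpen (Omega N) := by
  have h : Omega N = ⋂ (p : Fin N × Fin N) (_ : p.1 ≠ p.2), {x : Fin N → ℝ | x p.1 ≠ x p.2} := by
    ext x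
    simp only [Omega, Set.mem_setOf_eq, Set.mem_iInter]
    constructor
    · intro h p hp hxp; exact hp (h hxp)
    · intro h a b hab; by_contra hne; exact h (a, b) hne hab
  rw [h]
  exact isOpen_iInter_of_finite fun p => isOpen_iInter_of_finite fun hp =>
    isOpen_ne_fun (continuous_apply p.1) (continuous_apply p.2)

lemma hasFDerivAt_of_mem {f : (Fin N → ℝ) → ℝ} (hf : ContDiffOn ℝ (⊤ : ℕ∞) f (Omega N))
    {y : Fin N → ℝ} (hy : y ∈ Omega N) : HasFDerivAt f (fderiv ℝ f y) y :=
  (((hf y hy).contDiffAt ((isOpen_Omega).mem_nhds hy)).differentiableAt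
    (by simp)).hasFDerivAt

lemma key (i j : Fin N) (hij : i ≠ j)
    (f : (Fin N → ℝ) → ℝ) (hf : ContDiffOn ℝ (⊤ : ℕ∞) f (Omega N))
    (x : Fin N → ℝ) (hx : x ∈ Omega N) :
    pd i (Delta j f) x - Delta j (pd i f) x =
      (x j - x i)⁻¹ * (pd i f (x ∘ Equiv.swap j i) - pd j f (x ∘ Equiv.swap j i))
        + (f x - f (x ∘ Equiv.swap j i)) * ((x j - x i)⁻¹ * (x j - x i)⁻¹) := by
  classical
  set s : Finset (Fin N) := Finset.univ.erase j with hs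
  have hmem : ∀ k ∈ s, k ≠ j := fun k hk => (Finset.mem_erase.mp hk).1
  have hne : ∀ k, k ≠ j → x j - x k ≠ 0 := fun k hk =>
    sub_ne_zero.mpr (fun h => hk.symm (hx h))
  set D : Fin N → (Fin N → ℝ) →L[ℝ] ℝ := fun k =>
    (f x - f (x ∘ Equiv.swap j k)) •
      ((-(ContinuousLinearMap.mulLeftRight ℝ ℝ (x j - x k)⁻¹ (x j - x k)⁻¹)).comp
        ((ContinuousLinearMap.proj j : (Fin N → ℝ) →L[ℝ] ℝ) - ContinuousLinearMap.proj k))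
    + (x j - x k)⁻¹ •
      (fderiv ℝ f x - (fderiv ℝ f (x ∘ Equiv.swap j k)).comp (compCLM (Equiv.swap j k)))
    with hD_def
  have hD : ∀ k ∈ s, HasFDerivAt
      (fun y => (f y - f (y ∘ Equiv.swap j k)) * (y j - y k)⁻¹) (D k) x := by
    intro k hk
    have ht : x j - x k ≠ 0 := hne k (hmem k hk)
    have hσ : x ∘ (Equiv.swap j k) ∈ Omega N := hx.comp (Equiv.injective _)
    have h1 : HasFDerivAt f (fderiv ℝ f x) x := hasFDerivAt_of_mem hf hx
    have h2 : HasFDerivAt f (fderiv ℝ f (x ∘ Equiv.swap j k))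
        ((compCLM (Equiv.swap j k)) x) := hasFDerivAt_of_mem hf hσ
    have hc : HasFDerivAt (fun y => f y - f (y ∘ Equiv.swap j k))
        (fderiv ℝ f x - (fderiv ℝ f (x ∘ Equiv.swap j k)).comp (compCLM (Equiv.swap j k))) x :=
      h1.sub (h2.comp x (compCLM (Equiv.swap j k)).hasFDerivAt)
    have hpr : HasFDerivAt (fun y : Fin N → ℝ => y j - y k)
        ((ContinuousLinearMap.proj j : (Fin N → ℝ) →L[ℝ] ℝ) - ContinuousLinearMap.proj k) x :=
      ((ContinuousLinearMap.proj j : (Fin N → ℝ) →L[ℝ] ℝ).hasFDerivAt).sub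
        ((ContinuousLinearMap.proj k : (Fin N → ℝ) →L[ℝ] ℝ).hasFDerivAt)
    have hinv : HasFDerivAt (fun t : ℝ => t⁻¹)
        (-(ContinuousLinearMap.mulLeftRight ℝ ℝ (x j - x k)⁻¹ (x j - x k)⁻¹)) (x j - x k) :=
      hasFDerivAt_inv' ht
    exact hc.mul (hinv.comp x hpr)
  have hDelta : HasFDerivAt (Delta j f) (∑ k ∈ s, D k) x := by
    have h0 : HasFDerivAt
        (fun y => ∑ k ∈ s, (f y - f (y ∘ Equiv.swap j k)) * (y j - y k)⁻¹) (∑ k ∈ s, D k) x :=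
      HasFDerivAt.fun_sum hD
    have he : Delta j f =
        fun y => ∑ k ∈ s, (f y - f (y ∘ Equiv.swap j k)) * (y j - y k)⁻¹ := by
      funext y; simp [Delta, div_eq_mul_inv, hs]
    rw [he]; exact h0
  have hpdD : pd i (Delta j f) x = ∑ k ∈ s, D k (Pi.single i 1) := by
    rw [pd, hDelta.fderiv, ContinuousLinearMap.sum_apply]
  have hDval : ∀ k ∈ s, D k (Pi.single i 1) =
      (f x - f (x ∘ Equiv.swap j k)) *
        (-((x j - x k)⁻¹ * ((Pi.single i 1 : Fin N → ℝ) j - (Pi.single i 1 : Fin N → ℝ) k) * (x j - x k)⁻¹))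
      + (x j - x k)⁻¹ *
        (pd i f x - fderiv ℝ f (x ∘ Equiv.swap j k) (Pi.single (Equiv.swap j k i) 1)) := by
    intro k hk
    simp only [hD_def, ContinuousLinearMap.add_apply, ContinuousLinearMap.coe_smul',
      Pi.smul_apply, ContinuousLinearMap.comp_apply, ContinuousLinearMap.neg_apply,
      ContinuousLinearMap.sub_apply, ContinuousLinearMap.proj_apply,
      ContinuousLinearMap.mulLeftRight_apply, compCLM_single, Equiv.symm_swap,
      smul_eq_mul, pd]
  have hD2 : Delta j (pd i f) x =
      ∑ k ∈ s, (pd i f x - pd i f (x ∘ Equiv.swap j k)) * (x j - x k)⁻¹ := by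
    simp [Delta, div_eq_mul_inv, hs]
  rw [hpdD, hD2, ← Finset.sum_sub_distrib]
  have hi_mem : i ∈ s := by simp [hs, Finset.mem_erase, hij]
  have hzero : ∀ b ∈ s, b ≠ i →
      D b (Pi.single i 1) - (pd i f x - pd i f (x ∘ Equiv.swap j b)) * (x j - x b)⁻¹ = 0 := by
    intro b hb hbi
    rw [hDval b hb]
    have h1 : (Equiv.swap j b) i = i :=
      Equiv.swap_apply_of_ne_of_ne hij (Ne.symm hbi)
    rw [h1, Pi.single_eq_of_ne (Ne.symm hij), Pi.single_eq_of_ne hbi]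
    simp only [pd]
    ring
  rw [Finset.sum_eq_single_of_mem i hi_mem hzero, hDval i hi_mem,
    Equiv.swap_apply_right, Pi.single_eq_of_ne (Ne.symm hij), Pi.single_eq_same]
  simp only [pd]
  ring

theorem pd_Delta_commutator_symm {N : ℕ} (i j : Fin N) (hij : i ≠ j)
    (f : (Fin N → ℝ) → ℝ) (hf : ContDiffOn ℝ (⊤ : ℕ∞) f (Omega N))
    (x : Fin N → ℝ) (hx : x ∈ Omega N) :
    pd i (Delta j f) x - Delta j (pd i f) x =
      pd j (Delta i f) x - Delta i (pd j f) x := by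
  rw [key i j hij f hf x hx, key j i hij.symm f hf x hx, Equiv.swap_comm i j]
  have h : x i - x j = -(x j - x i) := by ring
  rw [h]
  simp only [inv_neg]
  ring
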